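/- arXiv:1704.01922 — 6 statements merged into one kernel-verified Lean document; each statement's English description precedes it below -/
import Mathlib

section
/- Let F be a family of finite simple graphs all of which are connected, and let G1 ⊆ G2 be graphs on a common finite vertex set. If the sandwich set SW_F(G1,G2) is non-empty, then it contains a graph G such that the vertex sets of the connected components of G coincide with the vertex sets of the connected components of G1; that is, for all vertices u and v, u and v are connected by a walk in G if and only if they are connected by a walk in G1. -/
open SimpleGraph

/-- `G` is `H`-free: no induced subgraph of `G` is isomorphic to `H`
(an induced copy is a graph embedding). -/
def InducedFree {α β : Type*} (H : SimpleGraph β) (G : SimpleGraph α) : Prop :=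
  ¬ Nonempty (H ↪g G)

/-- `G` belongs to the sandwich set `SW_F(G1, G2)`. -/
def InSandwich {V ι : Type*} {W : ι → Type*} (F : ∀ i, SimpleGraph (W i))
    (G1 G2 G : SimpleGraph V) : Prop :=
  G1 ≤ G ∧ G ≤ G2 ∧ ∀ i, InducedFree (F i) G

/-!
Given any `G` in the sandwich set, delete the edges of `G` joining different components of `G1`.
The result still lies between `G1` and `G2` and has the components of `G1`. An induced copy of a
connected graph in it lies inside a single component of `G1`, where nothing was deleted, so it is
already an induced copy in `G`.
-/

namespace SimpleGraph

variable {V : Type*}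

def withinComponents (G H : SimpleGraph V) : SimpleGraph V where
  Adj u v := G.Adj u v ∧ H.Reachable u v
  symm := ⟨fun _ _ h => ⟨h.1.symm, h.2.symm⟩⟩
  loopless := ⟨fun _ h => G.loopless.irrefl _ h.1⟩

variable {G H : SimpleGraph V}

theorem withinComponents_le : G.withinComponents H ≤ G :=
  fun _ _ h => h.1

theorem le_withinComponents (hHG : H ≤ G) : H ≤ G.withinComponents H :=
  fun _ _ h => ⟨hHG h, h.reachable⟩

theorem Reachable.of_withinComponents {u v : V} (h : (G.withinComponents H).Reachable u v) :
    H.Reachable u v := by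
  obtain ⟨p⟩ := h
  induction p with
  | nil => rfl
  | cons hadj _ ih => exact hadj.2.trans ih

theorem reachable_withinComponents_iff (hHG : H ≤ G) {u v : V} :
    (G.withinComponents H).Reachable u v ↔ H.Reachable u v :=
  ⟨Reachable.of_withinComponents, Reachable.mono (le_withinComponents hHG)⟩

def Embedding.ofWithinComponents {W : Type*} {F : SimpleGraph W} (hF : F.Connected)
    (f : F ↪g G.withinComponents H) : F ↪g G where
  toEmbedding := f.toEmbedding
  map_rel_iff' {a b} := by
    have hab : H.Reachable (f a) (f b) :=
      ((hF.preconnected a b).map f.toHom).of_withinComponents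
    exact ⟨fun h => f.map_rel_iff.mp ⟨h, hab⟩, fun h => (f.map_rel_iff.mpr h).1⟩

end SimpleGraph

theorem InducedFree.withinComponents {V W : Type*} {G H : SimpleGraph V} {F : SimpleGraph W}
    (hF : F.Connected) (hG : InducedFree F G) : InducedFree F (G.withinComponents H) :=
  fun ⟨f⟩ => hG ⟨Embedding.ofWithinComponents hF f⟩

theorem sandwich_components_general {V ι : Type*} {W : ι → Type*}
    (F : ∀ i, SimpleGraph (W i))
    (hconn : ∀ i, (F i).Connected)
    (G1 G2 : SimpleGraph V)
    (h : ∃ G, InSandwich F G1 G2 G) :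
    ∃ G, InSandwich F G1 G2 G ∧
      ∀ u v : V, G.Reachable u v ↔ G1.Reachable u v := by
  obtain ⟨G, hG1, hG2, hfree⟩ := h
  exact ⟨G.withinComponents G1,
    ⟨le_withinComponents hG1, withinComponents_le.trans hG2,
      fun i => (hfree i).withinComponents (hconn i)⟩,
    fun _ _ => reachable_withinComponents_iff hG1⟩

theorem sandwich_components {V ι : Type*} [Fintype V] {W : ι → Type*}
    [∀ i, Fintype (W i)] (F : ∀ i, SimpleGraph (W i))
    (hconn : ∀ i, (F i).Connected)
    (G1 G2 : SimpleGraph V) (h12 : G1 ≤ G2)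
    (h : ∃ G, InSandwich F G1 G2 G) :
    ∃ G, InSandwich F G1 G2 G ∧
      ∀ u v : V, G.Reachable u v ↔ G1.Reachable u v :=
  sandwich_components_general F hconn G1 G2 h
end

section
/- Let F be a family of finite simple graphs none of which has a universal vertex, and let G1 ⊆ G2 be graphs on a common finite vertex set. If u is a universal vertex of G2, then the sandwich set SW_F(G1,G2) is non-empty if and only if SW_F(G1 − u, G2 − u) is non-empty, where G − u denotes the induced subgraph obtained by deleting the vertex u. -/
open SimpleGraph

/-- `x` is a universal vertex of `G`: adjacent to every other vertex. -/
def IsUniversal {α : Type*} (G : SimpleGraph α) (x : α) : Prop :=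
  ∀ y, y ≠ x → G.Adj x y

/-!
Deleting `u` preserves sandwiches because induced subgraphs of an `F`-free graph are `F`-free.
Conversely, from a solution `G'` on `V ∖ {u}` put `u` back as a universal vertex; this stays
between `G1` and `G2` since `u` is universal in `G2`. An induced copy of a member of `F` in the
extended graph cannot meet `u`, because the preimage of `u` would be universal in that member,
so it is an induced copy in `G'`.
-/

lemma isUniversal_iff_simpleGraph_isUniversal {V : Type*} {G : SimpleGraph V} {x : V} :
    _root_.IsUniversal G x ↔ G.IsUniversal x :=
  ⟨fun h _ hy => h _ hy.symm, fun h _ hy => h hy.symm⟩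

namespace SimpleGraph

variable {V W X : Type*} {H : SimpleGraph W} {G : SimpleGraph V}

def Embedding.codRestrict (f : H ↪g G) (s : Set V) (hs : ∀ x, f x ∈ s) : H ↪g G.induce s where
  toFun x := ⟨f x, hs x⟩
  inj' _ _ h := f.injective (congrArg Subtype.val h)
  map_rel_iff' := f.map_rel_iff

lemma InducedFree.of_embedding {G' : SimpleGraph X} (hG : InducedFree H G) (e : G' ↪g G) :
    InducedFree H G' :=
  fun ⟨f⟩ => hG ⟨e.comp f⟩

lemma InducedFree.induce (hG : InducedFree H G) (s : Set V) : InducedFree H (G.induce s) :=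
  hG.of_embedding (Embedding.induce s)

lemma IsUniversal.of_embedding (f : H ↪g G) {x : W} (hx : G.IsUniversal (f x)) :
    H.IsUniversal x :=
  fun _ hy => f.map_adj_iff.mp (hx (f.injective.ne hy))

def addUniversal (u : V) (G' : SimpleGraph ({v | v ≠ u} : Set V)) : SimpleGraph V :=
  G'.map (Function.Embedding.subtype _) ⊔ fromRel fun v _ => v = u

variable {u : V} {G' : SimpleGraph ({v | v ≠ u} : Set V)}

lemma addUniversal_adj {v w : V} :
    (addUniversal u G').Adj v w ↔
      (∃ (hv : v ≠ u) (hw : w ≠ u), G'.Adj ⟨v, hv⟩ ⟨w, hw⟩) ∨ (v ≠ w ∧ (v = u ∨ w = u)) := by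
  simp only [addUniversal, sup_adj, map_adj, fromRel_adj, Function.Embedding.subtype_apply]
  constructor
  · rintro (⟨⟨v, hv⟩, ⟨w, hw⟩, h, rfl, rfl⟩ | h)
    exacts [Or.inl ⟨hv, hw, h⟩, Or.inr h]
  · rintro (⟨hv, hw, h⟩ | h)
    exacts [Or.inl ⟨⟨v, hv⟩, ⟨w, hw⟩, h, rfl, rfl⟩, Or.inr h]

lemma isUniversal_addUniversal : (addUniversal u G').IsUniversal u :=
  fun _ hy => addUniversal_adj.mpr (Or.inr ⟨hy, Or.inl rfl⟩)

lemma induce_addUniversal : (addUniversal u G').induce {v | v ≠ u} = G' := by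
  ext ⟨v, hv⟩ ⟨w, hw⟩
  simp only [comap_adj, Function.Embedding.subtype_apply, addUniversal_adj]
  constructor
  · rintro (⟨_, _, h⟩ | ⟨-, rfl | rfl⟩)
    exacts [h, absurd rfl hv, absurd rfl hw]
  · exact fun h => Or.inl ⟨hv, hw, h⟩

lemma le_addUniversal {G1 : SimpleGraph V} (h : G1.induce {v | v ≠ u} ≤ G') :
    G1 ≤ addUniversal u G' := by
  intro v w hvw
  refine addUniversal_adj.mpr ?_
  by_cases hv : v = u
  · exact Or.inr ⟨hvw.ne, Or.inl hv⟩
  by_cases hw : w = u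
  · exact Or.inr ⟨hvw.ne, Or.inr hw⟩
  exact Or.inl ⟨hv, hw, @h ⟨v, hv⟩ ⟨w, hw⟩ hvw⟩

lemma addUniversal_le {G2 : SimpleGraph V} (hu : G2.IsUniversal u)
    (h : G' ≤ G2.induce {v | v ≠ u}) : addUniversal u G' ≤ G2 := by
  intro v w hvw
  rcases addUniversal_adj.mp hvw with ⟨hv, hw, h'⟩ | ⟨hne, rfl | rfl⟩
  exacts [h h', hu hne, (hu hne.symm).symm]

lemma InducedFree.addUniversal (hH : ∀ x, ¬ H.IsUniversal x) (hG' : InducedFree H G') :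
    InducedFree H (addUniversal u G') := by
  rintro ⟨f⟩
  by_cases hu : ∃ x, f x = u
  · obtain ⟨x, hx⟩ := hu
    exact hH x (IsUniversal.of_embedding f (by rw [hx]; exact isUniversal_addUniversal))
  · rw [← induce_addUniversal (G' := G')] at hG'
    exact hG' ⟨f.codRestrict {v | v ≠ u} fun x hx => hu ⟨x, hx⟩⟩

end SimpleGraph

section Sandwich

variable {V ι : Type*} {W : ι → Type*} {F : ∀ i, SimpleGraph (W i)} {G1 G2 : SimpleGraph V}

lemma InSandwich.induce {G : SimpleGraph V} (hG : InSandwich F G1 G2 G) (s : Set V) :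
    InSandwich F (G1.induce s) (G2.induce s) (G.induce s) :=
  ⟨fun _ _ h => hG.1 h, fun _ _ h => hG.2.1 h, fun i => (hG.2.2 i).induce s⟩

lemma InSandwich.addUniversal (hF : ∀ i x, ¬ (F i).IsUniversal x) {u : V}
    (hu : G2.IsUniversal u) {G' : SimpleGraph ({v | v ≠ u} : Set V)}
    (hG' : InSandwich F (G1.induce {v | v ≠ u}) (G2.induce {v | v ≠ u}) G') :
    InSandwich F G1 G2 (addUniversal u G') :=
  ⟨le_addUniversal hG'.1, addUniversal_le hu hG'.2.1,
    fun i => (hG'.2.2 i).addUniversal (hF i)⟩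

end Sandwich

theorem sandwich_delete_universal_general {V ι : Type*} {W : ι → Type*}
    (F : ∀ i, SimpleGraph (W i))
    (hnouniv : ∀ i, ¬ ∃ x : W i, _root_.IsUniversal (F i) x)
    (G1 G2 : SimpleGraph V)
    (u : V) (hu : _root_.IsUniversal G2 u) :
    (∃ G, InSandwich F G1 G2 G) ↔
      (∃ G' : SimpleGraph ({v : V | v ≠ u} : Set V),
        InSandwich F (G1.induce {v : V | v ≠ u}) (G2.induce {v : V | v ≠ u}) G') :=
  ⟨fun ⟨_, hG⟩ => ⟨_, hG.induce _⟩,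
    fun ⟨_, hG'⟩ => ⟨_, hG'.addUniversal
      (fun i x hx => hnouniv i ⟨x, isUniversal_iff_simpleGraph_isUniversal.mpr hx⟩)
      (isUniversal_iff_simpleGraph_isUniversal.mp hu)⟩⟩

theorem sandwich_delete_universal {V ι : Type*} [Fintype V] {W : ι → Type*}
    [∀ i, Fintype (W i)] (F : ∀ i, SimpleGraph (W i))
    (hnouniv : ∀ i, ¬ ∃ x : W i, _root_.IsUniversal (F i) x)
    (G1 G2 : SimpleGraph V) (h12 : G1 ≤ G2)
    (u : V) (hu : _root_.IsUniversal G2 u) :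
    (∃ G, InSandwich F G1 G2 G) ↔
      (∃ G' : SimpleGraph ({v : V | v ≠ u} : Set V),
        InSandwich F (G1.induce {v : V | v ≠ u}) (G2.induce {v : V | v ≠ u}) G') :=
  sandwich_delete_universal_general F hnouniv G1 G2 u hu
end

section
/- A finite connected simple graph is paw-free if and only if it is triangle-free or P̄3-free, where P̄3-freeness means that the graph contains no induced subgraph isomorphic to the complement of the path on three vertices (i.e., an edge plus an isolated vertex). -/
/-! Paw-freeness says exactly that a vertex adjacent to one corner of a triangle is adjacent to a
second corner. Walking away from a triangle, this puts every vertex of a connected paw-free graph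
with a triangle into a triangle, so every edge `xy` lies in some triangle `xyc`. Such an edge
dominates the graph, which is what P̄3-freeness asks: along a walk `x, w, u, …, z`, if `u` misses
both `x` and `y`, then first `w` and then `u` are forced to be adjacent to `c`, and the walk from `u`
continues the argument with the triangle `cyx`. -/

open SimpleGraph

/-- The paw: a triangle `0,1,2` with a pendant vertex `3` attached to `2`. -/
def paw : SimpleGraph (Fin 4) := fromEdgeSet {s(0,1), s(0,2), s(1,2), s(2,3)}

/-- The complement of `P₃`: one edge plus an isolated vertex. -/
def P3bar : SimpleGraph (Fin 3) := fromEdgeSet {s(0,1)}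

instance : DecidableRel paw.Adj := fun _ _ => by unfold paw; infer_instance

instance : DecidableRel P3bar.Adj := fun _ _ => by unfold P3bar; infer_instance

theorem not_cliqueFree_three_paw : ¬ paw.CliqueFree 3 :=
  fun h => h {0, 1, 2} (is3Clique_triple_iff.mpr (by decide))

theorem P3bar_isIndContained_paw : P3bar ⊴ paw := ⟨⟨⟨![0, 1, 3], by decide⟩, by decide⟩⟩

section

variable {V : Type*} {G : SimpleGraph V}

theorem paw_isIndContained_of_adj {a b c t : V} (hab : G.Adj a b) (hac : G.Adj a c)
    (hbc : G.Adj b c) (hta : G.Adj t a) (htb : ¬ G.Adj t b) (htc : ¬ G.Adj t c) :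
    paw ⊴ G := by
  have htb' : t ≠ b := fun h => htc (h ▸ hbc)
  have htc' : t ≠ c := fun h => htb (h ▸ hbc.symm)
  refine ⟨⟨⟨![b, c, a, t], fun i j hij => ?_⟩, fun {i j} => ?_⟩⟩
  · fin_cases i <;> fin_cases j <;>
      simp_all [hab.ne, hac.ne, hbc.ne, hta.ne, hab.ne', hac.ne', hbc.ne', hta.ne']
  · change G.Adj (![b, c, a, t] i) (![b, c, a, t] j) ↔ paw.Adj i j
    fin_cases i <;> fin_cases j <;>
      simp_all [paw, hab.symm, hac.symm, hbc.symm, hta.symm, G.adj_comm t]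

theorem exists_of_P3bar_isIndContained (h : P3bar ⊴ G) :
    ∃ x y z, G.Adj x y ∧ z ≠ x ∧ z ≠ y ∧ ¬ G.Adj x z ∧ ¬ G.Adj y z := by
  obtain ⟨f⟩ := h
  refine ⟨f 0, f 1, f 2, ?_, ?_, ?_, ?_, ?_⟩
  · exact f.map_adj_iff.mpr (by decide)
  · exact f.injective.ne (by decide)
  · exact f.injective.ne (by decide)
  · exact fun hG => absurd (f.map_adj_iff.mp hG) (by decide)
  · exact fun hG => absurd (f.map_adj_iff.mp hG) (by decide)

theorem InducedFree.adj_or_adj_of_paw (hpaw : InducedFree paw G) {a b c t : V}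
    (hab : G.Adj a b) (hac : G.Adj a c) (hbc : G.Adj b c) (hta : G.Adj t a) :
    G.Adj t b ∨ G.Adj t c := by
  by_contra! h
  exact hpaw (paw_isIndContained_of_adj hab hac hbc hta h.1 h.2)

theorem InducedFree.exists_triangle_of_reachable (hpaw : InducedFree paw G) {u v : V}
    (huv : G.Reachable u v) (hu : ∃ a b, G.Adj u a ∧ G.Adj u b ∧ G.Adj a b) :
    ∃ a b, G.Adj v a ∧ G.Adj v b ∧ G.Adj a b := by
  obtain ⟨p⟩ := huv
  induction p with
  | nil => exact hu
  | @cons u w v huw _ ih =>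
    apply ih
    obtain ⟨a, b, hua, hub, hab⟩ := hu
    rcases hpaw.adj_or_adj_of_paw hua hub hab huw.symm with hwa | hwb
    · exact ⟨a, u, hwa, huw.symm, hua.symm⟩
    · exact ⟨b, u, hwb, huw.symm, hub.symm⟩

theorem InducedFree.dominates_of_walk (hpaw : InducedFree paw G) {w z : V} (p : G.Walk w z) :
    ∀ {x y c : V}, G.Adj x y → G.Adj x c → G.Adj y c → G.Adj x w →
      z = x ∨ z = y ∨ G.Adj x z ∨ G.Adj y z := by
  induction p with
  | nil => exact fun _ _ _ hxz => .inr <| .inr <| .inl hxz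
  | @cons w u z hwu _ ih =>
    intro x y c hxy hxc hyc hxw
    by_cases hux : G.Adj x u
    · exact ih hxy hxc hyc hux
    by_cases huy : G.Adj y u
    · have := ih hxy.symm hyc hxc huy
      tauto
    have hwy : ¬ G.Adj w y := fun hwy =>
      (hpaw.adj_or_adj_of_paw hxw.symm hwy hxy hwu.symm).elim
        (fun h => hux h.symm) (fun h => huy h.symm)
    have hwc : G.Adj w c := (hpaw.adj_or_adj_of_paw hxy hxc hyc hxw.symm).resolve_left hwy
    have hcu : G.Adj c u := ((hpaw.adj_or_adj_of_paw hxw.symm hwc hxc hwu.symm).resolve_left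
      (fun h => hux h.symm)).symm
    rcases ih hyc.symm hxc.symm hxy.symm hcu with rfl | hzy | hcz | hyz
    · exact .inr <| .inr <| .inl hxc
    · exact .inr <| .inl hzy
    · have := hpaw.adj_or_adj_of_paw hxc.symm hyc.symm hxy hcz.symm
      rw [G.adj_comm z, G.adj_comm z] at this
      tauto
    · exact .inr <| .inr <| .inr hyz

theorem InducedFree.P3bar_of_paw_of_connected (hpaw : InducedFree paw G) (hconn : G.Connected)
    (htri : ¬ G.CliqueFree 3) : InducedFree P3bar G := by
  classical
  intro hP3
  obtain ⟨x, y, z, hxy, hzx, hzy, hxz, hyz⟩ := exists_of_P3bar_isIndContained hP3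
  obtain ⟨s, hs⟩ := not_forall_not.mp htri
  obtain ⟨a, b, c, hab, hac, hbc, -⟩ := is3Clique_iff.mp hs
  obtain ⟨d, e, hxd, hxe, hde⟩ :=
    hpaw.exists_triangle_of_reachable (hconn a x) ⟨b, c, hab, hac, hbc⟩
  obtain ⟨f, hxf, hyf⟩ : ∃ f, G.Adj x f ∧ G.Adj y f :=
    (hpaw.adj_or_adj_of_paw hxd hxe hde hxy.symm).elim
      (fun h => ⟨d, hxd, h⟩) (fun h => ⟨e, hxe, h⟩)
  obtain ⟨p⟩ := hconn f z
  rcases hpaw.dominates_of_walk p hxy hxf hyf hxf with h | h | h | h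
  exacts [hzx h, hzy h, hxz h, hyz h]

end

theorem olariu_paw_free_general {V : Type*} (G : SimpleGraph V)
    (hconn : G.Connected) :
    InducedFree paw G ↔ (G.CliqueFree 3 ∨ InducedFree P3bar G) := by
  constructor
  · intro hpaw
    by_cases htri : G.CliqueFree 3
    · exact .inl htri
    · exact .inr (hpaw.P3bar_of_paw_of_connected hconn htri)
  · rintro (htri | hP3) hpaw
    · exact not_cliqueFree_three_paw (htri.comap (IsIndContained.isContained hpaw))
    · exact hP3 (P3bar_isIndContained_paw.trans hpaw)

theorem olariu_paw_free {V : Type*} [Fintype V] (G : SimpleGraph V)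
    (hconn : G.Connected) :
    InducedFree paw G ↔ (G.CliqueFree 3 ∨ InducedFree P3bar G) :=
  olariu_paw_free_general G hconn
end

section
/- If G is a finite connected simple graph that is {paw, claw}-free and contains a triangle, then the complement of G has maximum degree at most one; equivalently, G is a complete multipartite graph in which every partite set has at most two vertices. -/
open SimpleGraph

/-- The claw `K_{1,3}`: center `0` with leaves `1,2,3`. -/
def claw : SimpleGraph (Fin 4) := fromEdgeSet {s(0,1), s(0,2), s(0,3)}

/-- The maximum degree of `G` is at most one: every vertex has at most one neighbor. -/
def MaxDegreeLEOne {V : Type*} (G : SimpleGraph V) : Prop :=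
  ∀ v a b : V, G.Adj v a → G.Adj v b → a = b

/-!
In a paw-free graph, a vertex adjacent to one vertex of a triangle is adjacent to a second one.
Hence in a connected paw-free graph with a triangle every edge lies in a triangle, and the set of
vertices with no neighbour on a given triangle is closed under adjacency, so it is empty. It follows
that every vertex is adjacent to an end of every edge. If now `v` had two distinct non-neighbours
`a`, `b`, these would be non-adjacent, and any neighbour `p` of `v` would be adjacent to both of them,
so `p` with `v, a, b` would span a claw.
-/

namespace SimpleGraph

variable {V : Type*} {G : SimpleGraph V}

theorem Reachable.imp_of_forall_adj {P : V → Prop} (hP : ∀ u v, G.Adj u v → P u → P v)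
    {x y : V} (h : G.Reachable x y) : P x → P y := by
  obtain ⟨p⟩ := h
  induction p with
  | nil => exact id
  | cons h _ ih => exact ih ∘ hP _ _ h

end SimpleGraph

namespace InducedFree

variable {V : Type*} {G : SimpleGraph V}

theorem paw_adj_or_adj (hpaw : InducedFree paw G) {x y z u : V}
    (hxy : G.Adj x y) (hxz : G.Adj x z) (hyz : G.Adj y z) (hux : G.Adj u x) :
    G.Adj u y ∨ G.Adj u z := by
  by_contra! ⟨nuy, nuz⟩
  have := hxy.ne; have := hxz.ne; have := hyz.ne; have := hux.ne
  have : u ≠ y := fun h => nuz (by rw [h]; exact hyz)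
  have : u ≠ z := fun h => nuy (by rw [h]; exact hyz.symm)
  refine hpaw ⟨⟨⟨![y, z, x, u], fun i j hij => ?_⟩, fun {i j} => ?_⟩⟩
  · fin_cases i <;> fin_cases j <;> simp_all
  · change G.Adj (![y, z, x, u] i) (![y, z, x, u] j) ↔ paw.Adj i j
    fin_cases i <;> fin_cases j <;> simp_all [paw, fromEdgeSet_adj, G.adj_comm]

theorem claw_adj_or_adj_or_adj (hclaw : InducedFree claw G) {w a b c : V}
    (hwa : G.Adj w a) (hwb : G.Adj w b) (hwc : G.Adj w c)
    (hab : a ≠ b) (hac : a ≠ c) (hbc : b ≠ c) :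
    G.Adj a b ∨ G.Adj a c ∨ G.Adj b c := by
  by_contra! ⟨nab, nac, nbc⟩
  have := hwa.ne; have := hwb.ne; have := hwc.ne
  refine hclaw ⟨⟨⟨![w, a, b, c], fun i j hij => ?_⟩, fun {i j} => ?_⟩⟩
  · fin_cases i <;> fin_cases j <;> simp_all
  · change G.Adj (![w, a, b, c] i) (![w, a, b, c] j) ↔ claw.Adj i j
    fin_cases i <;> fin_cases j <;> simp_all [claw, fromEdgeSet_adj, G.adj_comm]

theorem paw_exists_triangle (hpaw : InducedFree paw G) (hconn : G.Connected)
    (htriangle : ¬ G.CliqueFree 3) (v : V) : ∃ x y, G.Adj v x ∧ G.Adj v y ∧ G.Adj x y := by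
  classical
  obtain ⟨s, hs⟩ := not_forall_not.mp htriangle
  obtain ⟨a, b, c, hab, hac, hbc, -⟩ := is3Clique_iff.mp hs
  refine (hconn a v).imp_of_forall_adj (P := fun w => ∃ x y, G.Adj w x ∧ G.Adj w y ∧ G.Adj x y)
    (fun w u hwu ⟨x, y, hwx, hwy, hxy⟩ => ?_) ⟨b, c, hab, hac, hbc⟩
  rcases hpaw.paw_adj_or_adj hwx hwy hxy hwu.symm with hux | huy
  exacts [⟨w, x, hwu.symm, hux, hwx⟩, ⟨w, y, hwu.symm, huy, hwy⟩]

theorem paw_exists_adj_adj_of_adj (hpaw : InducedFree paw G) (hconn : G.Connected)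
    (htriangle : ¬ G.CliqueFree 3) {x y : V} (hxy : G.Adj x y) :
    ∃ t, G.Adj x t ∧ G.Adj y t := by
  obtain ⟨p, q, hxp, hxq, hpq⟩ := hpaw.paw_exists_triangle hconn htriangle x
  rcases hpaw.paw_adj_or_adj hxp hxq hpq hxy.symm with hyp | hyq
  exacts [⟨p, hxp, hyp⟩, ⟨q, hxq, hyq⟩]

theorem paw_not_adj_of_adj_of_not_adj (hpaw : InducedFree paw G) {a b c w u : V}
    (hab : G.Adj a b) (hac : G.Adj a c) (hbc : G.Adj b c) (hwu : G.Adj w u)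
    (nwa : ¬ G.Adj w a) (nwb : ¬ G.Adj w b) (nwc : ¬ G.Adj w c) : ¬ G.Adj u a := by
  intro hua
  rcases hpaw.paw_adj_or_adj hab hac hbc hua with hub | huc
  · exact (hpaw.paw_adj_or_adj hua hub hab hwu).elim nwa nwb
  · exact (hpaw.paw_adj_or_adj hua huc hac hwu).elim nwa nwc

theorem paw_adj_of_isTriangle (hpaw : InducedFree paw G) (hconn : G.Preconnected)
    {x y t : V} (hxy : G.Adj x y) (hxt : G.Adj x t) (hyt : G.Adj y t) (z : V) :
    G.Adj z x ∨ G.Adj z y ∨ G.Adj z t := by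
  by_contra! ⟨nzx, nzy, nzt⟩
  have hx := (hconn z x).imp_of_forall_adj
    (P := fun w => ¬ G.Adj w x ∧ ¬ G.Adj w y ∧ ¬ G.Adj w t)
    (fun w u hwu ⟨nwx, nwy, nwt⟩ =>
      ⟨hpaw.paw_not_adj_of_adj_of_not_adj hxy hxt hyt hwu nwx nwy nwt,
        hpaw.paw_not_adj_of_adj_of_not_adj hxy.symm hyt hxt hwu nwy nwx nwt,
        hpaw.paw_not_adj_of_adj_of_not_adj hxt.symm hyt.symm hxy hwu nwt nwx nwy⟩)
    ⟨nzx, nzy, nzt⟩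
  exact hx.2.1 hxy

theorem paw_adj_or_adj_of_adj (hpaw : InducedFree paw G) (hconn : G.Connected)
    (htriangle : ¬ G.CliqueFree 3) {x y : V} (hxy : G.Adj x y) (z : V) :
    G.Adj z x ∨ G.Adj z y := by
  obtain ⟨t, hxt, hyt⟩ := hpaw.paw_exists_adj_adj_of_adj hconn htriangle hxy
  rcases hpaw.paw_adj_of_isTriangle hconn.preconnected hxy hxt hyt z with hzx | hzy | hzt
  exacts [.inl hzx, .inr hzy, hpaw.paw_adj_or_adj hxt.symm hyt.symm hxy hzt]

end InducedFree

theorem paw_claw_free_with_triangle_general {V : Type*} (G : SimpleGraph V)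
    (hconn : G.Connected) (hpaw : InducedFree paw G) (hclaw : InducedFree claw G)
    (htriangle : ¬ G.CliqueFree 3) :
    MaxDegreeLEOne Gᶜ := by
  intro v a b hva hvb
  obtain ⟨hva, nva⟩ := (G.compl_adj v a).mp hva
  obtain ⟨hvb, nvb⟩ := (G.compl_adj v b).mp hvb
  by_contra hab
  have nab : ¬ G.Adj a b := fun h => (hpaw.paw_adj_or_adj_of_adj hconn htriangle h v).elim nva nvb
  obtain ⟨p, hvp⟩ := (hconn v a).nonempty_neighborSet_left hva
  have hpa : G.Adj p a :=
    ((hpaw.paw_adj_or_adj_of_adj hconn htriangle hvp a).resolve_left (nva ·.symm)).symm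
  have hpb : G.Adj p b :=
    ((hpaw.paw_adj_or_adj_of_adj hconn htriangle hvp b).resolve_left (nvb ·.symm)).symm
  rcases hclaw.claw_adj_or_adj_or_adj hvp.symm hpa hpb hva hvb hab with h | h | h
  exacts [nva h, nvb h, nab h]

theorem paw_claw_free_with_triangle {V : Type*} [Fintype V] (G : SimpleGraph V)
    (hconn : G.Connected) (hpaw : InducedFree paw G) (hclaw : InducedFree claw G)
    (htriangle : ¬ G.CliqueFree 3) :
    MaxDegreeLEOne Gᶜ :=
  paw_claw_free_with_triangle_general G hconn hpaw hclaw htriangle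
end

section
/- If G is a finite simple graph that is {paw, K1 ∪ K3}-free and contains a triangle, then G is connected and P̄3-free, i.e., G contains no induced subgraph isomorphic to the complement of the path on three vertices. -/
open SimpleGraph

/-- `K1 ∪ K3`: a triangle `1,2,3` together with the isolated vertex `0`
(the complement of the claw). -/
def K1uK3 : SimpleGraph (Fin 4) := fromEdgeSet {s(1,2), s(1,3), s(2,3)}

/-! If a vertex `v` missed two vertices `a`, `b` of a triangle `abc`, then `v` together with the
triangle would induce a paw (if `v ~ c`) or `K1 ∪ K3` (if not). So every vertex sees at least two
vertices of every triangle; in particular any two vertices have a common neighbour on a fixed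
triangle, which makes `G` connected. An induced `P̄3`, i.e. an edge `xy` and a vertex `z` adjacent
to neither, is then impossible: `x`, `y` and a common neighbour `w` form a triangle of which `z`
misses two vertices. -/

namespace SimpleGraph

variable {V W : Type*} {G : SimpleGraph V}

theorem nonempty_embedding_of_adj_iff {H : SimpleGraph W}
    (hH : ∀ i j, ¬ H.Adj i j → (∀ k, H.Adj i k ↔ H.Adj j k) → i = j)
    (f : W → V) (hf : ∀ i j, G.Adj (f i) (f j) ↔ H.Adj i j) : Nonempty (H ↪g G) := by
  refine ⟨⟨⟨f, fun i j hij => hH i j ?_ fun k => ?_⟩, hf _ _⟩⟩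
  · simp [← hf, hij]
  · rw [← hf, ← hf, hij]

theorem nonempty_paw_embedding {a b c v : V}
    (hab : G.Adj a b) (hac : G.Adj a c) (hbc : G.Adj b c)
    (hva : ¬ G.Adj v a) (hvb : ¬ G.Adj v b) (hvc : G.Adj v c) : Nonempty (paw ↪g G) := by
  refine nonempty_embedding_of_adj_iff (by simp only [paw, fromEdgeSet_adj]; decide)
    ![a, b, c, v] fun i j => ?_
  fin_cases i <;> fin_cases j <;>
    simp [paw, hab, hac, hbc, hva, hvb, hvc, hab.symm, hac.symm, hbc.symm, hvc.symm,
      G.adj_comm _ v]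

theorem nonempty_K1uK3_embedding {a b c v : V}
    (hab : G.Adj a b) (hac : G.Adj a c) (hbc : G.Adj b c)
    (hva : ¬ G.Adj v a) (hvb : ¬ G.Adj v b) (hvc : ¬ G.Adj v c) :
    Nonempty (K1uK3 ↪g G) := by
  refine nonempty_embedding_of_adj_iff (by simp only [K1uK3, fromEdgeSet_adj]; decide)
    ![v, a, b, c] fun i j => ?_
  fin_cases i <;> fin_cases j <;>
    simp [K1uK3, hab, hac, hbc, hva, hvb, hvc, hab.symm, hac.symm, hbc.symm, G.adj_comm _ v]

variable (hpaw : InducedFree paw G) (hK1uK3 : InducedFree K1uK3 G)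
include hpaw hK1uK3

theorem adj_or_adj_of_triangle {a b c : V} (hab : G.Adj a b) (hac : G.Adj a c)
    (hbc : G.Adj b c) (v : V) : G.Adj v a ∨ G.Adj v b := by
  by_contra! ⟨hva, hvb⟩
  by_cases hvc : G.Adj v c
  · exact hpaw (nonempty_paw_embedding hab hac hbc hva hvb hvc)
  · exact hK1uK3 (nonempty_K1uK3_embedding hab hac hbc hva hvb hvc)

theorem exists_common_adj_of_triangle {a b c : V} (hab : G.Adj a b) (hac : G.Adj a c)
    (hbc : G.Adj b c) (x y : V) : ∃ w, G.Adj x w ∧ G.Adj y w := by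
  have hab' := adj_or_adj_of_triangle hpaw hK1uK3 hab hac hbc
  have hac' := adj_or_adj_of_triangle hpaw hK1uK3 hac hab hbc.symm
  have hbc' := adj_or_adj_of_triangle hpaw hK1uK3 hbc hab.symm hac.symm
  by_cases hxa : G.Adj x a <;> by_cases hya : G.Adj y a
  · exact ⟨a, hxa, hya⟩
  · have hyb := (hab' y).resolve_left hya
    have hyc := (hac' y).resolve_left hya
    exact (hbc' x).elim (fun hxb => ⟨b, hxb, hyb⟩) fun hxc => ⟨c, hxc, hyc⟩
  · have hxb := (hab' x).resolve_left hxa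
    have hxc := (hac' x).resolve_left hxa
    exact (hbc' y).elim (fun hyb => ⟨b, hxb, hyb⟩) fun hyc => ⟨c, hxc, hyc⟩
  · exact ⟨b, (hab' x).resolve_left hxa, (hab' y).resolve_left hya⟩

theorem connected_of_triangle {a b c : V} (hab : G.Adj a b) (hac : G.Adj a c)
    (hbc : G.Adj b c) : G.Connected := by
  have : Nonempty V := ⟨a⟩
  refine ⟨fun x y => ?_⟩
  obtain ⟨w, hxw, hyw⟩ := exists_common_adj_of_triangle hpaw hK1uK3 hab hac hbc x y
  exact hxw.reachable.trans hyw.reachable.symm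

theorem inducedFree_P3bar_of_triangle {a b c : V} (hab : G.Adj a b) (hac : G.Adj a c)
    (hbc : G.Adj b c) : InducedFree P3bar G := by
  rintro ⟨f⟩
  have hxy : G.Adj (f 0) (f 1) := f.map_adj_iff.mpr (by simp [P3bar])
  obtain ⟨w, hxw, hyw⟩ := exists_common_adj_of_triangle hpaw hK1uK3 hab hac hbc (f 0) (f 1)
  rcases adj_or_adj_of_triangle hpaw hK1uK3 hxy hxw hyw (f 2) with h | h <;>
    exact absurd (f.map_adj_iff.mp h) (by simp [P3bar])

end SimpleGraph

theorem paw_coclaw_free_with_triangle_general {V : Type*} (G : SimpleGraph V)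
    (hpaw : InducedFree paw G) (hK1uK3 : InducedFree K1uK3 G)
    (htriangle : ¬ G.CliqueFree 3) :
    G.Connected ∧ InducedFree P3bar G := by
  classical
  simp only [CliqueFree, is3Clique_iff, not_forall, not_not] at htriangle
  obtain ⟨-, a, b, c, hab, hac, hbc, -⟩ := htriangle
  exact ⟨connected_of_triangle hpaw hK1uK3 hab hac hbc,
    inducedFree_P3bar_of_triangle hpaw hK1uK3 hab hac hbc⟩

theorem paw_coclaw_free_with_triangle {V : Type*} [Fintype V] (G : SimpleGraph V)
    (hpaw : InducedFree paw G) (hK1uK3 : InducedFree K1uK3 G)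
    (htriangle : ¬ G.CliqueFree 3) :
    G.Connected ∧ InducedFree P3bar G :=
  paw_coclaw_free_with_triangle_general G hpaw hK1uK3 htriangle
end

section
/- A finite connected simple graph G that contains a triangle is {paw, K4}-free if and only if G is a complete multipartite graph with at most three partite sets; that is, if and only if the vertex set of G can be partitioned into at most three independent sets such that every two vertices in different parts are adjacent. -/
open SimpleGraph

/-- The complete graph on four vertices. -/
def K4 : SimpleGraph (Fin 4) := ⊤

/-- `G` is a complete multipartite graph with at most three partite sets:
the vertices can be colored with three colors so that two vertices are
adjacent exactly when they receive different colors. -/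
def IsCompleteMultipartiteLE3 {V : Type*} (G : SimpleGraph V) : Prop :=
  ∃ c : V → Fin 3, ∀ u v : V, G.Adj u v ↔ c u ≠ c v

/-!
Fix a triangle `t 0, t 1, t 2`. In a paw-free graph, a vertex adjacent to one vertex of a
triangle but not to a second is adjacent to the third; in a `K4`-free graph, two adjacent
vertices have no two common adjacent neighbours. Together these show that "`v` is adjacent to
exactly two of the `t i`" passes from a vertex to its neighbours, hence by connectivity holds
everywhere, and colouring `v` by the `i` with `v` not adjacent to `t i` exhibits the three
parts. Conversely, non-adjacency is transitive in a complete multipartite graph but not in the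
paw, and a graph with three parts is `3`-colourable, hence `K4`-free.
-/

theorem Fin.exists_others_of_three (i : Fin 3) :
    ∃ j k, j ≠ i ∧ k ≠ i ∧ j ≠ k ∧ ∀ l, l = i ∨ l = j ∨ l = k := by
  revert i; decide

theorem Fin.exists_three_ne_and_ne (i i' : Fin 3) : ∃ k, k ≠ i ∧ k ≠ i' := by
  revert i i'; decide

namespace SimpleGraph

variable {V : Type*} {G : SimpleGraph V}

theorem inducedFree_K4_iff_cliqueFree : InducedFree K4 G ↔ G.CliqueFree 4 := by
  have h := cliqueFree_iff_top_free (G := G) (β := Fin 4)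
  rw [Fintype.card_fin] at h
  rw [h, Free, ← top_isIndContained_iff_top_isContained]
  rfl

theorem not_adj_of_cliqueFree_four (hG : G.CliqueFree 4) {x y u v : V} (hxy : G.Adj x y)
    (hux : G.Adj u x) (huy : G.Adj u y) (hvx : G.Adj v x) (hvy : G.Adj v y) : ¬G.Adj u v := by
  classical
  intro huv
  refine hG {u, v, x, y} ((is3Clique_triple_iff.2 ⟨hvx, hvy, hxy⟩).insert ?_)
  simp [huv, hux, huy]

theorem adj_of_inducedFree_paw (hG : InducedFree paw G) {x y z v : V} (hxy : G.Adj x y)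
    (hxz : G.Adj x z) (hyz : G.Adj y z) (hvx : G.Adj v x) (hvy : ¬G.Adj v y) : G.Adj v z := by
  by_contra hvz
  have hvy' : ¬G.Adj y v := fun h => hvy h.symm
  have hvz' : ¬G.Adj z v := fun h => hvz h.symm
  refine hG ⟨⟨⟨![y, z, x, v], fun i j hij => ?_⟩, fun {i j} => ?_⟩⟩
  · have := hxy.ne; have := hxz.ne; have := hyz.ne; have := hvx.ne
    have : v ≠ y := fun h => hvz (h ▸ hyz)
    have : v ≠ z := fun h => hvy (h ▸ hyz.symm)
    fin_cases i <;> fin_cases j <;> simp_all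
  · change G.Adj (![y, z, x, v] i) (![y, z, x, v] j) ↔ _
    fin_cases i <;> fin_cases j <;>
      simp [paw, hxy, hxz, hyz, hvx, hvy, hvz, hvy', hvz', hxy.symm, hxz.symm, hyz.symm, hvx.symm]

theorem Preconnected.forall_of_adj_closed (hG : G.Preconnected) {P : V → Prop} {a : V}
    (ha : P a) (hP : ∀ u v, G.Adj u v → P u → P v) (v : V) : P v := by
  induction (reachable_iff_reflTransGen a v).1 (hG a v) with
  | refl => exact ha
  | tail _ hbc ih => exact hP _ _ hbc ih

theorem IsCompleteMultipartiteLE3.colorable (hG : IsCompleteMultipartiteLE3 G) :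
    G.Colorable 3 :=
  let ⟨c, hc⟩ := hG
  ⟨Coloring.mk c fun h => (hc _ _).1 h⟩

theorem IsCompleteMultipartiteLE3.inducedFree_paw (hG : IsCompleteMultipartiteLE3 G) :
    InducedFree paw G := by
  obtain ⟨c, hc⟩ := hG
  rintro ⟨f⟩
  have hadj (i j : Fin 4) : c (f i) ≠ c (f j) ↔ paw.Adj i j := (hc _ _).symm.trans f.map_adj_iff
  have h01 : c (f 0) ≠ c (f 1) := (hadj 0 1).2 (by simp [paw])
  have h03 : c (f 0) = c (f 3) := not_not.1 fun h => by simpa [paw] using (hadj 0 3).1 h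
  have h13 : c (f 1) = c (f 3) := not_not.1 fun h => by simpa [paw] using (hadj 1 3).1 h
  exact h01 (h03.trans h13.symm)

def SeesAllBut (t : completeGraph (Fin 3) ↪g G) (v : V) (i : Fin 3) : Prop :=
  ∀ j, G.Adj v (t j) ↔ j ≠ i

namespace SeesAllBut

variable {t : completeGraph (Fin 3) ↪g G}

theorem self (i : Fin 3) : SeesAllBut t (t i) i := fun j => by
  simp [t.map_adj_iff, ne_comm]

theorem exists_of_adj (hpaw : InducedFree paw G) (hK4 : G.CliqueFree 4) {u v : V} {i : Fin 3}
    (hu : SeesAllBut t u i) (huv : G.Adj u v) : ∃ i', SeesAllBut t v i' := by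
  obtain ⟨j, k, hji, hki, hjk, hall⟩ := Fin.exists_others_of_three i
  have htjk : G.Adj (t j) (t k) := t.map_adj_iff.2 hjk
  have htji : G.Adj (t j) (t i) := t.map_adj_iff.2 hji
  have htki : G.Adj (t k) (t i) := t.map_adj_iff.2 hki
  have huj : G.Adj u (t j) := (hu j).2 hji
  have huk : G.Adj u (t k) := (hu k).2 hki
  by_cases hvj : G.Adj v (t j) <;> by_cases hvk : G.Adj v (t k)
  · exact absurd huv (not_adj_of_cliqueFree_four hK4 htjk huj huk hvj hvk)
  · have hvi : G.Adj v (t i) := adj_of_inducedFree_paw hpaw htjk htji htki hvj hvk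
    refine ⟨k, fun l => ?_⟩
    rcases hall l with rfl | rfl | rfl <;> simp [*, hki.symm]
  · have hvi : G.Adj v (t i) := adj_of_inducedFree_paw hpaw htjk.symm htki htji hvk hvj
    refine ⟨j, fun l => ?_⟩
    rcases hall l with rfl | rfl | rfl <;> simp [*, hji.symm, hjk.symm]
  · exact absurd (adj_of_inducedFree_paw hpaw huj huk htjk huv.symm hvj) hvk

theorem adj_iff (hpaw : InducedFree paw G) (hK4 : G.CliqueFree 4) {u v : V} {i i' : Fin 3}
    (hu : SeesAllBut t u i) (hv : SeesAllBut t v i') : G.Adj u v ↔ i ≠ i' := by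
  refine ⟨?_, fun hii' => ?_⟩
  · rintro huv rfl
    obtain ⟨j, k, hji, hki, hjk, -⟩ := Fin.exists_others_of_three i
    exact not_adj_of_cliqueFree_four hK4 (t.map_adj_iff.2 hjk) ((hu j).2 hji) ((hu k).2 hki)
      ((hv j).2 hji) ((hv k).2 hki) huv
  · obtain ⟨k, hki, hki'⟩ := Fin.exists_three_ne_and_ne i i'
    exact (adj_of_inducedFree_paw hpaw (t.map_adj_iff.2 hki') ((hu k).2 hki).symm
      ((hu i').2 hii'.symm).symm ((hv k).2 hki') ((hv i').1.mt (· rfl))).symm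

end SeesAllBut

theorem isCompleteMultipartiteLE3_of_inducedFree_paw (hconn : G.Preconnected)
    (htri : ¬G.CliqueFree 3) (hpaw : InducedFree paw G) (hK4 : G.CliqueFree 4) :
    IsCompleteMultipartiteLE3 G := by
  let t := topEmbeddingOfNotCliqueFree htri
  have hparts : ∀ v, ∃ i, SeesAllBut t v i :=
    hconn.forall_of_adj_closed ⟨0, SeesAllBut.self 0⟩ fun _ _ huv ⟨_, hu⟩ =>
      hu.exists_of_adj hpaw hK4 huv
  choose c hc using hparts
  exact ⟨c, fun u v => (hc u).adj_iff hpaw hK4 (hc v)⟩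

end SimpleGraph

theorem paw_K4_free_iff_complete_tripartite_general {V : Type*}
    (G : SimpleGraph V) (hconn : G.Connected) (htriangle : ¬ G.CliqueFree 3) :
    (InducedFree paw G ∧ InducedFree K4 G) ↔ IsCompleteMultipartiteLE3 G := by
  rw [inducedFree_K4_iff_cliqueFree]
  exact ⟨fun ⟨hpaw, hK4⟩ =>
      isCompleteMultipartiteLE3_of_inducedFree_paw hconn.preconnected htriangle hpaw hK4,
    fun h => ⟨h.inducedFree_paw, h.colorable.cliqueFree (by norm_num)⟩⟩

theorem paw_K4_free_iff_complete_tripartite {V : Type*} [Fintype V]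
    (G : SimpleGraph V) (hconn : G.Connected) (htriangle : ¬ G.CliqueFree 3) :
    (InducedFree paw G ∧ InducedFree K4 G) ↔ IsCompleteMultipartiteLE3 G :=
  paw_K4_free_iff_complete_tripartite_general G hconn htriangle
end
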